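/- arXiv:0810.3110 — 5 statements merged into one kernel-verified Lean document; each statement's English description precedes it below -/
import Mathlib

section
/- Allan–Douglas local principle: Let B be a complex unital Banach algebra with identity e and let Z be a closed subalgebra of B containing e and contained in the center of B (so Z is a commutative unital Banach algebra). For a maximal ideal ω of Z, let J_ω denote the smallest closed two-sided ideal of B containing ω. Then an element b ∈ B is invertible in B if and only if for every maximal ideal ω of Z the coset b + J_ω is invertible in the quotient algebra B/J_ω. -/
/-!
If `b` is not left invertible, it lies in a maximal left ideal `L` of `B`, which is closed. The
module `B ⧸ L` is then a simple Banach `B`-module, so by Schur's lemma and the nonemptiness of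
spectra every central element acts on it as a scalar. Hence `Z` acts on `B ⧸ L` through a
character, whose kernel `ω` is a maximal ideal of `Z` lying in the annihilator of `B ⧸ L`. That
annihilator is a closed two-sided ideal, so it contains `J ω`, and modulo it `b` is still not left
invertible. Right invertibility is handled in the opposite algebra.
-/

theorem TwoSidedIdeal.exists_mul_sub_one_mem_of_isUnit {A : Type*} [Ring A]
    {I : TwoSidedIdeal A} {b : A} (hb : IsUnit (I.ringCon.mk' b)) :
    ∃ c, c * b - 1 ∈ I ∧ b * c - 1 ∈ I := by
  obtain ⟨u, hu⟩ := hb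
  obtain ⟨c, hc⟩ := I.ringCon.mk'_surjective ↑u⁻¹
  refine ⟨c, (I.rel_iff _ _).1 ((RingCon.eq _).1 ?_), (I.rel_iff _ _).1 ((RingCon.eq _).1 ?_)⟩
  · change I.ringCon.mk' (c * b) = I.ringCon.mk' 1
    rw [map_mul, map_one, hc, ← hu, Units.inv_mul]
  · change I.ringCon.mk' (b * c) = I.ringCon.mk' 1
    rw [map_mul, map_one, hc, ← hu, Units.mul_inv]

theorem TwoSidedIdeal.exists_isMaximal_of_forall_exists_sub_algebraMap_mem
    {k A R : Type*} [Field k] [Ring A] [Algebra k A] [Ring R] [Algebra k R]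
    {I : TwoSidedIdeal A} (hI : (1 : A) ∉ I) (φ : R →ₐ[k] A)
    (hφ : ∀ r, ∃ c : k, φ r - algebraMap k A c ∈ I) :
    ∃ ω : Ideal R, ω.IsMaximal ∧ ∀ r ∈ ω, φ r ∈ I := by
  let ψ := (I.ringCon.mkₐ k).comp φ
  have : Nontrivial I.ringCon.Quotient :=
    ⟨⟨I.ringCon.mk' 1, I.ringCon.mk' 0, fun h => hI ((I.mem_iff 1).2 ((RingCon.eq _).1 h))⟩⟩
  have hψ : ψ.range ≤ ⊥ := by
    rintro _ ⟨r, rfl⟩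
    obtain ⟨c, hc⟩ := hφ r
    exact Algebra.mem_bot.2 ⟨c, ((RingCon.eq _).2 ((I.rel_iff _ _).2 hc)).symm⟩
  -- `ψ` takes values in the copy `⊥ ≅ k` of the scalars in `A ⧸ I`, so it is a character.
  let χ : R →ₐ[k] k :=
    (Algebra.botEquivOfInjective (algebraMap k _).injective).toAlgHom.comp
      (ψ.codRestrict ⊥ fun r => hψ ⟨r, rfl⟩)
  refine ⟨RingHom.ker χ, RingHom.ker_isMaximal_of_surjective χ
    fun c => ⟨algebraMap k R c, χ.commutes c⟩, fun r hr => ?_⟩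
  have : ψ r = 0 := congrArg Subtype.val (by simpa [χ] using hr :
    ψ.codRestrict ⊥ (fun r => hψ ⟨r, rfl⟩) r = 0)
  exact (I.mem_iff _).2 ((RingCon.eq _).1 this)

theorem Module.isClosed_annihilator {R M : Type*} [Ring R] [TopologicalSpace R] [AddCommGroup M]
    [Module R M] [TopologicalSpace M] [T1Space M] [ContinuousSMul R M] :
    IsClosed (Module.annihilator R M : Set R) := by
  have : (Module.annihilator R M : Set R) = ⋂ m : M, (· • m) ⁻¹' {0} := by
    ext r; simp [Module.mem_annihilator]
  rw [this]
  exact isClosed_iInter fun m => isClosed_singleton.preimage (continuous_id.smul continuous_const)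

def Module.End.smulOfCommute {A M : Type*} [Ring A] [AddCommGroup M] [Module A M] {w : A}
    (hw : ∀ a, Commute w a) : Module.End A M where
  toFun m := w • m
  map_add' := smul_add w
  map_smul' a m := by simp only [smul_smul, (hw a).eq, RingHom.id_apply]

theorem Ideal.exists_isMaximal_mem_of_forall_mul_ne_one {A : Type*} [Ring A] {b : A}
    (hb : ∀ c, c * b ≠ 1) : ∃ L : Ideal A, L.IsMaximal ∧ b ∈ L := by
  have hspan : Ideal.span {b} ≠ ⊤ := fun h => by
    obtain ⟨c, hc⟩ := Submodule.mem_span_singleton.1 ((Ideal.eq_top_iff_one _).1 h)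
    exact hb c hc
  obtain ⟨L, hL, hbL⟩ := Ideal.exists_le_maximal _ hspan
  exact ⟨L, hL, hbL (Ideal.mem_span_singleton_self b)⟩

section BanachAlgebra

variable {A R : Type*} [NormedRing A] [NormedAlgebra ℂ A] [CompleteSpace A]

theorem Ideal.IsMaximal.exists_sub_algebraMap_mem_annihilator {L : Ideal A} (hL : L.IsMaximal)
    {z : A} (hz : ∀ a, Commute z a) :
    ∃ μ : ℂ, z - algebraMap ℂ A μ ∈ Module.annihilator A (A ⧸ L) := by
  have : Nontrivial (A ⧸ L) := Submodule.Quotient.nontrivial_iff.2 hL.ne_top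
  have : IsSimpleModule A (A ⧸ L) := isSimpleModule_iff_isCoatom.2 hL.out
  let T : (A ⧸ L) →L[ℂ] (A ⧸ L) :=
    ⟨(Module.End.smulOfCommute (M := A ⧸ L) hz).restrictScalars ℂ, continuous_const_smul z⟩
  obtain ⟨μ, hμ⟩ := spectrum.nonempty T
  have hw : ∀ a, Commute (algebraMap ℂ A μ - z) a := fun a =>
    (Algebra.commute_algebraMap_left μ a).sub_left (hz a)
  rcases (Module.End.smulOfCommute (M := A ⧸ L) hw).bijective_or_eq_zero with hbij | hzero
  · refine absurd (ContinuousLinearMap.isUnit_iff_bijective.2 ?_) hμ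
    convert hbij using 1
    ext m
    simp [T, Module.End.smulOfCommute, sub_smul]
  · refine ⟨μ, neg_sub (algebraMap ℂ A μ) z ▸ Submodule.neg_mem _ ?_⟩
    exact Module.mem_annihilator.2 fun m => LinearMap.congr_fun hzero m

variable [Ring R] [Algebra ℂ R]

theorem exists_isMaximal_closed_twoSidedIdeal_of_forall_mul_ne_one (φ : R →ₐ[ℂ] A)
    (hφ : ∀ r a, Commute (φ r) a) {b : A} (hb : ∀ c, c * b ≠ 1) :
    ∃ ω : Ideal R, ω.IsMaximal ∧ ∃ I : TwoSidedIdeal A,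
      IsClosed (I : Set A) ∧ (∀ r ∈ ω, φ r ∈ I) ∧ ∀ c, c * b - 1 ∉ I := by
  obtain ⟨L, hL, hbL⟩ := Ideal.exists_isMaximal_mem_of_forall_mul_ne_one hb
  let I := (Module.annihilator A (A ⧸ L)).toTwoSided
  have hI : ∀ x, x ∈ I ↔ ∀ m : A ⧸ L, x • m = 0 := fun x => by
    rw [Ideal.mem_toTwoSided, Module.mem_annihilator]
  have hone : Submodule.Quotient.mk (1 : A) ≠ (0 : A ⧸ L) := fun h =>
    hL.ne_top ((Ideal.eq_top_iff_one _).2 ((Submodule.Quotient.mk_eq_zero L).1 h))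
  obtain ⟨ω, hω, hωI⟩ := I.exists_isMaximal_of_forall_exists_sub_algebraMap_mem
    (fun h => hone (by simpa using (hI 1).1 h (Submodule.Quotient.mk 1))) φ
    fun r => (hL.exists_sub_algebraMap_mem_annihilator (hφ r)).imp
      fun _ h => Ideal.mem_toTwoSided.2 h
  refine ⟨ω, hω, I, ?_, hωI, fun c hc => hone ?_⟩
  · rw [Ideal.coe_toTwoSided]
    exact Module.isClosed_annihilator
  · have hb0 : b • Submodule.Quotient.mk (1 : A) = (0 : A ⧸ L) := by
      rw [← Submodule.Quotient.mk_smul, smul_eq_mul, mul_one, Submodule.Quotient.mk_eq_zero]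
      exact hbL
    simpa [sub_smul, mul_smul, hb0] using (hI _).1 hc (Submodule.Quotient.mk 1)

open MulOpposite in
theorem exists_isMaximal_closed_twoSidedIdeal_of_forall_mul_ne_one' (φ : R →ₐ[ℂ] A)
    (hφ : ∀ r a, Commute (φ r) a) {b : A} (hb : ∀ c, b * c ≠ 1) :
    ∃ ω : Ideal R, ω.IsMaximal ∧ ∃ I : TwoSidedIdeal A,
      IsClosed (I : Set A) ∧ (∀ r ∈ ω, φ r ∈ I) ∧ ∀ c, b * c - 1 ∉ I := by
  obtain ⟨ω, hω, I, hIc, hωI, hbI⟩ := exists_isMaximal_closed_twoSidedIdeal_of_forall_mul_ne_one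
    (φ.toOpposite fun x y => hφ x (φ y)) (fun r a => (hφ r a.unop).op)
    (b := op b) fun c h => hb c.unop (by simpa using congrArg unop h)
  refine ⟨ω, hω, I.unop, ?_, fun r hr => by simpa using hωI r hr, fun c hc => hbI (op c) ?_⟩
  · rw [TwoSidedIdeal.coe_unop]
    exact hIc.preimage continuous_op
  · simpa using hc

end BanachAlgebra

theorem allan_douglas_local_principle_general
    {B : Type*} [NormedRing B] [NormedAlgebra ℂ B] [CompleteSpace B]
    (Z : Subalgebra ℂ B)
    (hZcentral : ∀ z ∈ Z, ∀ b : B, z * b = b * z)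
    (J : Ideal Z → TwoSidedIdeal B)
    (hJ : ∀ ω : Ideal Z,
      J ω = sInf {I : TwoSidedIdeal B |
        IsClosed (I : Set B) ∧ ∀ z : Z, z ∈ ω → (z : B) ∈ I})
    (b : B) :
    IsUnit b ↔ ∀ ω : Ideal Z, ω.IsMaximal → IsUnit ((J ω).ringCon.mk' b) := by
  have hZ : ∀ (z : Z) (a : B), Commute (Z.val z) a := fun z a => hZcentral z z.2 a
  have hJ_le : ∀ ω (I : TwoSidedIdeal B), IsClosed (I : Set B) → (∀ z ∈ ω, Z.val z ∈ I) → J ω ≤ I :=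
    fun ω _ hI hωI => hJ ω ▸ sInf_le ⟨hI, hωI⟩
  refine ⟨fun hb ω _ => hb.map _, fun h => isUnit_iff_exists_and_exists.2 ⟨?_, ?_⟩⟩
  all_goals by_contra! hb
  · obtain ⟨ω, hω, I, hIc, hωI, hbI⟩ :=
      exists_isMaximal_closed_twoSidedIdeal_of_forall_mul_ne_one' Z.val hZ hb
    obtain ⟨c, -, hc⟩ := TwoSidedIdeal.exists_mul_sub_one_mem_of_isUnit (h ω hω)
    exact hbI c (hJ_le ω I hIc hωI hc)
  · obtain ⟨ω, hω, I, hIc, hωI, hbI⟩ :=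
      exists_isMaximal_closed_twoSidedIdeal_of_forall_mul_ne_one Z.val hZ hb
    obtain ⟨c, hc, -⟩ := TwoSidedIdeal.exists_mul_sub_one_mem_of_isUnit (h ω hω)
    exact hbI c (hJ_le ω I hIc hωI hc)

/-- **Allan–Douglas local principle.** Let `B` be a complex unital Banach algebra and
`Z` a closed subalgebra of `B` contained in the center of `B` (it automatically contains
the identity, being a subalgebra). For a maximal ideal `ω` of `Z`, let `J ω` be the smallest
closed two-sided ideal of `B` containing (the image in `B` of) `ω`. Then `b : B` is invertible
in `B` if and only if for every maximal ideal `ω` of `Z` the coset of `b` is invertible in the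
quotient algebra `B / J ω`. -/
theorem allan_douglas_local_principle
    {B : Type*} [NormedRing B] [NormedAlgebra ℂ B] [CompleteSpace B]
    (Z : Subalgebra ℂ B) (hZclosed : IsClosed (Z : Set B))
    (hZcentral : ∀ z ∈ Z, ∀ b : B, z * b = b * z)
    (J : Ideal Z → TwoSidedIdeal B)
    (hJ : ∀ ω : Ideal Z,
      J ω = sInf {I : TwoSidedIdeal B |
        IsClosed (I : Set B) ∧ ∀ z : Z, z ∈ ω → (z : B) ∈ I})
    (b : B) :
    IsUnit b ↔ ∀ ω : Ideal Z, ω.IsMaximal → IsUnit ((J ω).ringCon.mk' b) :=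
  allan_douglas_local_principle_general Z hZcentral J hJ b
end

section
/- If α(x) = β(x) = δx for all x ∈ ℝ, where δ is a real number, then the leaf coincides with the logarithmic double spiral: for distinct complex numbers z₁ ≠ z₂ and real p > 1, L(z₁,z₂;p,α,β) = S(z₁,z₂;p,δ). -/
/-!
On the line `Im γ = 1/p + δ Re γ`, to which `Y(p, α, β)` degenerates, `ζ = e^{2πγ}` has
`log |ζ| = 2π Re γ` and `arg ζ ≡ 2π Im γ (mod 2π)`, so `e^{2π·}` maps the line onto the spiral
`arg ζ - δ log |ζ| ≡ 2π/p` around `0` and `∞`; conversely every point of that spiral has a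
logarithm on the line. The Möbius transform `M_{z₁,z₂}` is inverted by `z ↦ (z - z₁)/(z - z₂)`
away from `ζ ∈ {0, 1}`, and it carries this spiral onto `𝒮(z₁, z₂; p, δ)`. The point `ζ = 1`
is not on the spiral since `0 < 1/p < 1` is not an integer.
-/

/-- The Möbius transform `M_{z₁,z₂}(ζ) = (z₂ ζ - z₁)/(ζ - 1)`. -/
noncomputable def moebius (z₁ z₂ ζ : ℂ) : ℂ := (z₂ * ζ - z₁) / (ζ - 1)

/-- The set `Y(p, α, β) = {γ = x + iy : 1/p + α(x) ≤ y ≤ 1/p + β(x)}`. -/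
def Yset (p : ℝ) (α β : ℝ → ℝ) : Set ℂ :=
  {γ : ℂ | 1 / p + α γ.re ≤ γ.im ∧ γ.im ≤ 1 / p + β γ.re}

/-- The leaf `𝓛(z₁, z₂; p, α, β) = {M_{z₁,z₂}(e^{2πγ}) : γ ∈ Y(p,α,β)} ∪ {z₁, z₂}`. -/
noncomputable def leaf (z₁ z₂ : ℂ) (p : ℝ) (α β : ℝ → ℝ) : Set ℂ :=
  ((fun γ : ℂ => moebius z₁ z₂ (Complex.exp (2 * Real.pi * γ))) '' Yset p α β) ∪ {z₁, z₂}

/-- The circular arc `𝒜(z₁, z₂; p)`: the points `z ∉ {z₁, z₂}` such that (some value of)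
`arg ((z - z₁)/(z - z₂))` is congruent to `2π/p` modulo `2π`, together with `z₁` and `z₂`. -/
noncomputable def circularArc (z₁ z₂ : ℂ) (p : ℝ) : Set ℂ :=
  {z : ℂ | z ≠ z₁ ∧ z ≠ z₂ ∧
    ∃ k : ℤ, Complex.arg ((z - z₁) / (z - z₂)) = 2 * Real.pi / p + 2 * Real.pi * k} ∪ {z₁, z₂}

/-- The logarithmic double spiral `𝒮(z₁, z₂; p, δ)`: the points `z ∉ {z₁, z₂}` such that
`arg ((z - z₁)/(z - z₂)) - δ log |(z - z₁)/(z - z₂)|` is congruent to `2π/p` modulo `2π`,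
together with `z₁` and `z₂`. -/
noncomputable def logSpiral (z₁ z₂ : ℂ) (p δ : ℝ) : Set ℂ :=
  {z : ℂ | z ≠ z₁ ∧ z ≠ z₂ ∧
    ∃ k : ℤ, Complex.arg ((z - z₁) / (z - z₂)) -
        δ * Real.log ‖(z - z₁) / (z - z₂)‖ =
      2 * Real.pi / p + 2 * Real.pi * k} ∪ {z₁, z₂}

open Complex Set

section Moebius

variable {z₁ z₂ : ℂ}

lemma moebius_sub_right {ζ : ℂ} (hζ : ζ ≠ 1) :
    moebius z₁ z₂ ζ - z₂ = (z₂ - z₁) / (ζ - 1) := by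
  have : ζ - 1 ≠ 0 := sub_ne_zero.mpr hζ
  unfold moebius
  field_simp
  ring

lemma moebius_ne_right (hz : z₁ ≠ z₂) {ζ : ℂ} (hζ : ζ ≠ 1) : moebius z₁ z₂ ζ ≠ z₂ := by
  rw [← sub_ne_zero, moebius_sub_right hζ]
  exact div_ne_zero (sub_ne_zero.mpr hz.symm) (sub_ne_zero.mpr hζ)

lemma moebius_sub_div_moebius_sub (hz : z₁ ≠ z₂) {ζ : ℂ} (hζ : ζ ≠ 1) :
    (moebius z₁ z₂ ζ - z₁) / (moebius z₁ z₂ ζ - z₂) = ζ := by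
  have hζ' : ζ - 1 ≠ 0 := sub_ne_zero.mpr hζ
  have hz' : z₂ - z₁ ≠ 0 := sub_ne_zero.mpr hz.symm
  have hleft : moebius z₁ z₂ ζ - z₁ = ζ * (z₂ - z₁) / (ζ - 1) := by
    unfold moebius
    field_simp
    ring
  rw [hleft, moebius_sub_right hζ]
  field_simp

lemma moebius_sub_div_sub (hz : z₁ ≠ z₂) {z : ℂ} (hz₂ : z ≠ z₂) :
    moebius z₁ z₂ ((z - z₁) / (z - z₂)) = z := by
  have hz₂' : z - z₂ ≠ 0 := sub_ne_zero.mpr hz₂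
  have hden : (z - z₁) / (z - z₂) - 1 ≠ 0 := by
    rw [div_sub_one hz₂', sub_sub_sub_cancel_left]
    exact div_ne_zero (sub_ne_zero.mpr hz.symm) hz₂'
  unfold moebius
  rw [div_eq_iff hden]
  field_simp
  ring

lemma moebius_image (hz : z₁ ≠ z₂) {S : Set ℂ} (h₀ : (0 : ℂ) ∉ S) (h₁ : (1 : ℂ) ∉ S) :
    moebius z₁ z₂ '' S = {z | z ≠ z₁ ∧ z ≠ z₂ ∧ (z - z₁) / (z - z₂) ∈ S} := by
  ext z
  constructor
  · rintro ⟨ζ, hζS, rfl⟩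
    have hζ₁ : ζ ≠ 1 := ne_of_mem_of_not_mem hζS h₁
    have hratio := moebius_sub_div_moebius_sub hz hζ₁
    refine ⟨fun h => ?_, moebius_ne_right hz hζ₁, by rwa [hratio]⟩
    rw [h, sub_self, zero_div] at hratio
    exact h₀ (hratio ▸ hζS)
  · rintro ⟨-, hz₂, hS⟩
    exact ⟨_, hS, moebius_sub_div_sub hz hz₂⟩

end Moebius

lemma Yset_self (p : ℝ) (α : ℝ → ℝ) : Yset p α α = {γ | γ.im = 1 / p + α γ.re} := by
  ext γ
  simp only [Yset, mem_ofPred_eq, le_antisymm_iff, and_comm]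

lemma image_ofReal_mul_setOf_im_eq {r : ℝ} (hr : r ≠ 0) (c δ : ℝ) :
    (fun γ : ℂ => (r : ℂ) * γ) '' {γ | γ.im = c + δ * γ.re} =
      {w | w.im = r * c + δ * w.re} := by
  ext w
  constructor
  · rintro ⟨γ, hγ, rfl⟩
    simp only [mem_ofPred_eq, re_ofReal_mul, im_ofReal_mul] at hγ ⊢
    rw [hγ]
    ring
  · intro hw
    refine ⟨w / r, ?_, mul_div_cancel₀ w (ofReal_ne_zero.mpr hr)⟩
    simp only [mem_ofPred_eq, div_ofReal_re, div_ofReal_im] at hw ⊢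
    rw [hw]
    field_simp

/-- The pullback of `𝒮(z₁, z₂; p, δ)` under `M_{z₁,z₂}`, for `θ = 2π/p`. -/
def centralLogSpiral (θ δ : ℝ) : Set ℂ :=
  {ζ | ζ ≠ 0 ∧ ∃ k : ℤ, arg ζ - δ * Real.log ‖ζ‖ = θ + 2 * Real.pi * k}

lemma one_notMem_centralLogSpiral {c : ℝ} (hc₀ : 0 < c) (hc₁ : c < 1) (δ : ℝ) :
    (1 : ℂ) ∉ centralLogSpiral (2 * Real.pi * c) δ := by
  rintro ⟨-, k, hk⟩
  simp only [arg_one, norm_one, Real.log_one, mul_zero, sub_zero] at hk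
  have hck : c + k = 0 :=
    (mul_eq_zero.mp (by linear_combination -hk)).resolve_left (by positivity : 2 * Real.pi ≠ 0)
  have : (0 : ℤ) < -k := by exact_mod_cast (by linarith : (0 : ℝ) < -k)
  have : -k < (1 : ℤ) := by exact_mod_cast (by linarith : (-k : ℝ) < 1)
  omega

lemma exp_image_setOf_im_eq (θ δ : ℝ) :
    exp '' {w | w.im = θ + δ * w.re} = centralLogSpiral θ δ := by
  ext ζ
  have exp_eq_iff (hζ : ζ ≠ 0) {w : ℂ} : exp w = ζ ↔ ∃ n : ℤ, w = log ζ + n * (2 * Real.pi * I) := by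
    rw [← exp_eq_exp_iff_exists_int, exp_log hζ]
  have re_eq (n : ℤ) : (log ζ + n * (2 * Real.pi * I)).re = Real.log ‖ζ‖ := by
    simp [log_re]
  have im_eq (n : ℤ) : (log ζ + n * (2 * Real.pi * I)).im = arg ζ + 2 * Real.pi * n := by
    simp [log_im]
    ring
  constructor
  · rintro ⟨w, hw, hwζ⟩
    have hζ : ζ ≠ 0 := hwζ ▸ exp_ne_zero w
    obtain ⟨n, rfl⟩ := (exp_eq_iff hζ).mp hwζ
    refine ⟨hζ, -n, ?_⟩
    rw [mem_ofPred_eq, re_eq, im_eq] at hw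
    push_cast
    linarith
  · rintro ⟨hζ, k, hk⟩
    refine ⟨log ζ + (-k : ℤ) * (2 * Real.pi * I), ?_, (exp_eq_iff hζ).mpr ⟨-k, rfl⟩⟩
    rw [mem_ofPred_eq, re_eq, im_eq]
    push_cast
    linarith

/-- If `α(x) = β(x) = δ x`, the leaf `𝓛(z₁, z₂; p, α, β)` is the logarithmic double spiral
`𝒮(z₁, z₂; p, δ)`. -/
theorem leaf_eq_logSpiral (z₁ z₂ : ℂ) (hz : z₁ ≠ z₂) (p : ℝ) (hp : 1 < p) (δ : ℝ) :
    leaf z₁ z₂ p (fun x => δ * x) (fun x => δ * x) = logSpiral z₁ z₂ p δ := by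
  have hexp : (fun γ : ℂ => exp (2 * Real.pi * γ)) = exp ∘ fun γ => ((2 * Real.pi : ℝ) : ℂ) * γ := by
    ext γ
    push_cast
    rfl
  have hS : (fun γ : ℂ => exp (2 * Real.pi * γ)) '' Yset p (fun x => δ * x) (fun x => δ * x) =
      centralLogSpiral (2 * Real.pi * (1 / p)) δ := by
    rw [Yset_self, hexp, image_comp, image_ofReal_mul_setOf_im_eq (by positivity),
      exp_image_setOf_im_eq]
  have hp₀ : 0 < p := zero_lt_one.trans hp
  rw [leaf, ← image_image (moebius z₁ z₂) (fun γ : ℂ => exp (2 * Real.pi * γ)), hS,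
    moebius_image hz (fun h => h.1 rfl) (one_notMem_centralLogSpiral (one_div_pos.mpr hp₀)
      ((div_lt_one hp₀).mpr hp) δ), mul_one_div]
  refine congrArg (· ∪ {z₁, z₂}) (ext fun z => and_congr_right fun h₁ => and_congr_right fun h₂ => ?_)
  exact and_iff_right (div_ne_zero (sub_ne_zero.mpr h₁) (sub_ne_zero.mpr h₂))
end

section
/- Let δ⁻ ≤ δ⁺ be real numbers and let α(x) := min(δ⁻x, δ⁺x), β(x) := max(δ⁻x, δ⁺x) for x ∈ ℝ. Then for distinct complex numbers z₁ ≠ z₂ and real p > 1, the leaf is the union of logarithmic double spirals: L(z₁,z₂;p,α,β) = ⋃_{δ ∈ [δ⁻,δ⁺]} S(z₁,z₂;p,δ). -/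
/-!
Away from `ζ = 1` the Möbius map is inverted by `z ↦ (z - z₁)/(z - z₂)`, and `exp (2πγ)` never
equals `1` on `Y`, since there `γ ∈ iℤ` would force `Im γ = 1/p ∈ (0, 1)`. So `z ∉ {z₁, z₂}` lies in
the leaf iff `w = (z - z₁)/(z - z₂)` is `exp (2πγ)` for some `γ = x + iy ∈ Y`, i.e.
`2πx = log |w|` and `2πy ≡ arg w (mod 2π)`. For `α = min`, `β = max`, the set `Y` is the union over
`δ ∈ [δ⁻, δ⁺]` of the lines `y = 1/p + δx`, and `exp (2π ·)` maps each such line onto the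
`w` with `arg w - δ log |w| ≡ 2π/p (mod 2π)`.
-/

open Complex Set

lemma moebius_eq_iff {z₁ z₂ ζ z : ℂ} (hζ : ζ ≠ 1) (hz : z ≠ z₂) :
    moebius z₁ z₂ ζ = z ↔ ζ = (z - z₁) / (z - z₂) := by
  rw [moebius, div_eq_iff (sub_ne_zero.mpr hζ), eq_div_iff (sub_ne_zero.mpr hz)]
  constructor <;> intro h <;> linear_combination -h

lemma exp_two_pi_mul_ne_one_of_mem_Yset {p : ℝ} {α β : ℝ → ℝ} {γ : ℂ}
    (hα : 0 < 1 / p + α 0) (hβ : 1 / p + β 0 < 1) (hγ : γ ∈ Yset p α β) :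
    exp (2 * Real.pi * γ) ≠ 1 := by
  intro h
  obtain ⟨n, hn⟩ := exp_eq_one_iff.mp h
  have hγn : γ = n * I := by
    have h2π : (2 * Real.pi : ℂ) ≠ 0 := by simp [Real.pi_ne_zero]
    apply mul_left_cancel₀ h2π
    rw [hn]; ring
  have hre : γ.re = 0 := by simp [hγn]
  have him : γ.im = n := by simp [hγn]
  obtain ⟨hlow, hupp⟩ := hγ
  rw [hre, him] at hlow hupp
  have h0 : (0 : ℤ) < n := by exact_mod_cast hα.trans_le hlow
  have h1 : n < (1 : ℤ) := by exact_mod_cast hupp.trans_lt hβ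
  omega

lemma mem_leaf_iff {z₁ z₂ z : ℂ} {p : ℝ} {α β : ℝ → ℝ}
    (hα : 0 < 1 / p + α 0) (hβ : 1 / p + β 0 < 1) (hz₁ : z ≠ z₁) (hz₂ : z ≠ z₂) :
    z ∈ leaf z₁ z₂ p α β ↔
      ∃ γ ∈ Yset p α β, exp (2 * Real.pi * γ) = (z - z₁) / (z - z₂) := by
  simp only [leaf, mem_union, mem_image, mem_insert_iff, mem_singleton_iff, hz₁, hz₂,
    or_false]
  refine exists_congr fun γ => and_congr_right fun hγ => ?_
  exact moebius_eq_iff (exp_two_pi_mul_ne_one_of_mem_Yset hα hβ hγ) hz₂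

lemma mem_logSpiral_iff {z₁ z₂ z : ℂ} {p δ : ℝ} (hz₁ : z ≠ z₁) (hz₂ : z ≠ z₂) :
    z ∈ logSpiral z₁ z₂ p δ ↔
      ∃ k : ℤ, arg ((z - z₁) / (z - z₂)) - δ * Real.log ‖(z - z₁) / (z - z₂)‖ =
        2 * Real.pi / p + 2 * Real.pi * k := by
  simp [logSpiral, hz₁, hz₂]

lemma mem_Yset_min_max_iff {p δminus δplus : ℝ} (hδ : δminus ≤ δplus) {γ : ℂ} :
    γ ∈ Yset p (fun x => min (δminus * x) (δplus * x)) (fun x => max (δminus * x) (δplus * x)) ↔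
      ∃ δ ∈ Icc δminus δplus, γ.im = 1 / p + δ * γ.re := by
  have hIcc : Icc (min (δminus * γ.re) (δplus * γ.re)) (max (δminus * γ.re) (δplus * γ.re)) =
      (· * γ.re) '' Icc δminus δplus := by
    rw [← uIcc_of_le hδ, image_mul_const_uIcc]; rfl
  rw [Yset, mem_ofPred_eq, ← le_sub_iff_add_le', ← sub_le_iff_le_add', ← mem_Icc, hIcc]
  simp only [mem_image, eq_sub_iff_add_eq', eq_comm]

lemma exists_exp_two_pi_mul_eq_iff {p δ : ℝ} {w : ℂ} (hw : w ≠ 0) :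
    (∃ γ : ℂ, γ.im = 1 / p + δ * γ.re ∧ exp (2 * Real.pi * γ) = w) ↔
      ∃ k : ℤ, arg w - δ * Real.log ‖w‖ = 2 * Real.pi / p + 2 * Real.pi * k := by
  constructor
  · rintro ⟨γ, hline, hexp⟩
    rw [← exp_log hw, exp_eq_exp_iff_exists_int] at hexp
    obtain ⟨n, hn⟩ := hexp
    have hre : 2 * Real.pi * γ.re = Real.log ‖w‖ := by
      simpa [log_re] using congrArg re hn
    have him : 2 * Real.pi * γ.im = arg w + n * (2 * Real.pi) := by
      simpa [log_im] using congrArg im hn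
    refine ⟨-n, ?_⟩
    push_cast
    linear_combination -him + δ * hre + 2 * Real.pi * hline
  · rintro ⟨k, hk⟩
    refine ⟨log w / (2 * Real.pi : ℝ) - k * I, ?_, ?_⟩
    · simp only [sub_re, sub_im, div_ofReal_re, div_ofReal_im, log_re, log_im, mul_I_re,
        mul_I_im, intCast_re, intCast_im]
      field_simp
      linear_combination hk
    · push_cast
      rw [mul_sub, mul_div_cancel₀ _ (by simp [Real.pi_ne_zero]), exp_sub, exp_log hw,
        show (2 * Real.pi * (k * I) : ℂ) = k * (2 * Real.pi * I) by ring,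
        exp_int_mul_two_pi_mul_I, div_one]

theorem leaf_eq_iUnion_logSpiral_general (δminus δplus : ℝ) (hδ : δminus ≤ δplus)
    (z₁ z₂ : ℂ) (p : ℝ) (hp : 1 < p) :
    leaf z₁ z₂ p (fun x => min (δminus * x) (δplus * x))
        (fun x => max (δminus * x) (δplus * x)) =
      ⋃ δ ∈ Set.Icc δminus δplus, logSpiral z₁ z₂ p δ := by
  ext z
  by_cases hends : z = z₁ ∨ z = z₂
  · exact iff_of_true (Or.inr hends) (mem_iUnion₂.mpr ⟨δminus, ⟨le_rfl, hδ⟩, Or.inr hends⟩)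
  obtain ⟨hz₁, hz₂⟩ := not_or.mp hends
  have hp₀ : 0 < p := zero_lt_one.trans hp
  have hw : (z - z₁) / (z - z₂) ≠ 0 := div_ne_zero (sub_ne_zero.mpr hz₁) (sub_ne_zero.mpr hz₂)
  have hα : 0 < 1 / p + min (δminus * 0) (δplus * 0) := by simpa using hp₀
  have hβ : 1 / p + max (δminus * 0) (δplus * 0) < 1 := by simpa using (div_lt_one hp₀).mpr hp
  rw [mem_leaf_iff hα hβ hz₁ hz₂]
  simp only [mem_iUnion₂, exists_prop, mem_logSpiral_iff hz₁ hz₂,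
    ← exists_exp_two_pi_mul_eq_iff hw, mem_Yset_min_max_iff hδ]
  exact ⟨fun ⟨γ, ⟨δ, hδI, hline⟩, hexp⟩ => ⟨δ, hδI, γ, hline, hexp⟩,
    fun ⟨δ, hδI, γ, hline, hexp⟩ => ⟨γ, ⟨δ, hδI, hline⟩, hexp⟩⟩

/-- For `α(x) = min (δ⁻ x, δ⁺ x)` and `β(x) = max (δ⁻ x, δ⁺ x)`, the leaf is the union of
the logarithmic double spirals `𝒮(z₁, z₂; p, δ)` over `δ ∈ [δ⁻, δ⁺]`. -/
theorem leaf_eq_iUnion_logSpiral (δminus δplus : ℝ) (hδ : δminus ≤ δplus)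
    (z₁ z₂ : ℂ) (hz : z₁ ≠ z₂) (p : ℝ) (hp : 1 < p) :
    leaf z₁ z₂ p (fun x => min (δminus * x) (δplus * x))
        (fun x => max (δminus * x) (δplus * x)) =
      ⋃ δ ∈ Set.Icc δminus δplus, logSpiral z₁ z₂ p δ :=
  leaf_eq_iUnion_logSpiral_general δminus δplus hδ z₁ z₂ p hp
end

section
/- Reduction step in the proof of the boundedness theorem: Let δ⁻ ≤ δ⁺ be real numbers and let α(x) := min(δ⁻x, δ⁺x), β(x) := max(δ⁻x, δ⁺x) for x ∈ ℝ. Let P > 1 and m > 1 be real numbers and γ ∈ ℂ. If 0 < 1/P + Re γ + α(Im γ) and 1/P + Re γ + β(Im γ) < 1, then there exists a real number p₀ with 1 < p₀ < m such that 0 < (P − p₀)/P − p₀·Re γ + α(−p₀·Im γ) and (P − p₀)/P − p₀·Re γ + β(−p₀·Im γ) < 1. -/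
/-!
For `p > 0`, scaling by `-p` exchanges `α` and `β`: `α (-p y) = -p β y` and `β (-p y) = -p α y`.
The two quantities in the conclusion are therefore `1 - p (1/P + Re γ + β (Im γ))` and
`1 - p (1/P + Re γ + α (Im γ))`. The second is below `1` for every `p > 0` by the first hypothesis,
and the first is positive for all `p` close enough to `1` by the second hypothesis.
-/

open Filter Topology

section ScaleByNeg

variable {R : Type*} [CommRing R] [LinearOrder R] [IsStrictOrderedRing R]

theorem min_mul_neg_mul_eq_neg_mul_max (a b y : R) {c : R} (hc : 0 ≤ c) :
    min (a * (-c * y)) (b * (-c * y)) = -(c * max (a * y) (b * y)) := by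
  rw [mul_max_of_nonneg _ _ hc, ← min_neg_neg]
  congr 1 <;> ring

theorem max_mul_neg_mul_eq_neg_mul_min (a b y : R) {c : R} (hc : 0 ≤ c) :
    max (a * (-c * y)) (b * (-c * y)) = -(c * min (a * y) (b * y)) := by
  rw [mul_min_of_nonneg _ _ hc, ← max_neg_neg]
  congr 1 <;> ring

end ScaleByNeg

theorem exists_one_lt_lt_and_mul_lt_one {m B : ℝ} (hm : 1 < m) (hB : B < 1) :
    ∃ p : ℝ, 1 < p ∧ p < m ∧ p * B < 1 := by
  have hlt_m : ∀ᶠ p in 𝓝 (1 : ℝ), p < m := tendsto_id.eventually_lt_const hm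
  have hmul : ∀ᶠ p in 𝓝 (1 : ℝ), p * B < 1 :=
    (tendsto_id.mul_const B).eventually_lt_const (by simpa using hB)
  have hnear : ∀ᶠ p in 𝓝[>] (1 : ℝ), p < m ∧ p * B < 1 := nhdsWithin_le_nhds (hlt_m.and hmul)
  obtain ⟨p, ⟨hpm, hpB⟩, hp1⟩ := (hnear.and self_mem_nhdsWithin).exists
  exact ⟨p, hp1, hpm, hpB⟩

theorem exists_p0_reduction_general (δminus δplus : ℝ)
    (α β : ℝ → ℝ)
    (hα : ∀ x : ℝ, α x = min (δminus * x) (δplus * x))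
    (hβ : ∀ x : ℝ, β x = max (δminus * x) (δplus * x))
    (P m : ℝ) (hP : 1 < P) (hm : 1 < m) (γ : ℂ)
    (h₁ : 0 < 1 / P + γ.re + α γ.im)
    (h₂ : 1 / P + γ.re + β γ.im < 1) :
    ∃ p₀ : ℝ, 1 < p₀ ∧ p₀ < m ∧
      0 < (P - p₀) / P - p₀ * γ.re + α (-p₀ * γ.im) ∧
      (P - p₀) / P - p₀ * γ.re + β (-p₀ * γ.im) < 1 := by
  obtain ⟨p, hp1, hpm, hpB⟩ := exists_one_lt_lt_and_mul_lt_one hm h₂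
  have hp0 : 0 < p := by linarith
  have hα_neg : α (-p * γ.im) = -(p * β γ.im) := by
    rw [hα, hβ, min_mul_neg_mul_eq_neg_mul_max _ _ _ hp0.le]
  have hβ_neg : β (-p * γ.im) = -(p * α γ.im) := by
    rw [hα, hβ, max_mul_neg_mul_eq_neg_mul_min _ _ _ hp0.le]
  have hshift : ∀ t, (P - p) / P - p * γ.re + -(p * t) = 1 - p * (1 / P + γ.re + t) := by
    intro t
    field_simp
    ring
  refine ⟨p, hp1, hpm, ?_, ?_⟩
  · rw [hα_neg, hshift]
    linarith
  · rw [hβ_neg, hshift]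
    linarith [mul_pos hp0 h₁]

/-- **Reduction step in the proof of the boundedness theorem.** Let `α(x) = min (δ⁻ x, δ⁺ x)`,
`β(x) = max (δ⁻ x, δ⁺ x)`, let `P > 1` and `m > 1` be real and `γ ∈ ℂ`. If
`0 < 1/P + Re γ + α(Im γ)` and `1/P + Re γ + β(Im γ) < 1`, then there is `p₀` with
`1 < p₀ < m`, `0 < (P - p₀)/P - p₀ Re γ + α(-p₀ Im γ)` and
`(P - p₀)/P - p₀ Re γ + β(-p₀ Im γ) < 1`. -/
theorem exists_p0_reduction (δminus δplus : ℝ) (hδ : δminus ≤ δplus)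
    (α β : ℝ → ℝ)
    (hα : ∀ x : ℝ, α x = min (δminus * x) (δplus * x))
    (hβ : ∀ x : ℝ, β x = max (δminus * x) (δplus * x))
    (P m : ℝ) (hP : 1 < P) (hm : 1 < m) (γ : ℂ)
    (h₁ : 0 < 1 / P + γ.re + α γ.im)
    (h₂ : 1 / P + γ.re + β γ.im < 1) :
    ∃ p₀ : ℝ, 1 < p₀ ∧ p₀ < m ∧
      0 < (P - p₀) / P - p₀ * γ.re + α (-p₀ * γ.im) ∧
      (P - p₀) / P - p₀ * γ.re + β (-p₀ * γ.im) < 1 :=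
  exists_p0_reduction_general δminus δplus α β hα hβ P m hP hm γ h₁ h₂
end

section
/- Let δ⁻ ≤ δ⁺ be real numbers, let α(x) := min(δ⁻x, δ⁺x), β(x) := max(δ⁻x, δ⁺x) for x ∈ ℝ, and let p > 1 be a real number. Then 0 and 1 are not isolated points of the leaf L(0,1;p,α,β); that is, 0 is a cluster point of L(0,1;p,α,β) ∖ {0} and 1 is a cluster point of L(0,1;p,α,β) ∖ {1}. -/
open Filter Topology Bornology

theorem accPt_of_tendsto_nhdsNE {X α : Type*} [TopologicalSpace X] {l : Filter α} [l.NeBot]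
    {f : α → X} {x : X} {C : Set X} (hf : Tendsto f l (𝓝[≠] x)) (hC : ∀ᶠ t in l, f t ∈ C) :
    AccPt x (𝓟 C) :=
  accPt_iff_frequently_nhdsNE.2 (hf.frequently hC.frequently)

section Moebius

variable {z₁ z₂ w : ℂ}

theorem moebius_zero (z₁ z₂ : ℂ) : moebius z₁ z₂ 0 = z₁ := by
  simp [moebius]

theorem moebius_ne_left (h : z₁ ≠ z₂) (hw₀ : w ≠ 0) (hw₁ : w ≠ 1) : moebius z₁ z₂ w ≠ z₁ := by
  rw [moebius, Ne, div_eq_iff (sub_ne_zero.2 hw₁)]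
  intro heq
  exact h (mul_right_cancel₀ hw₀ (by linear_combination heq)).symm

theorem moebius_ne_right_s12 (h : z₁ ≠ z₂) (hw₁ : w ≠ 1) : moebius z₁ z₂ w ≠ z₂ := by
  rw [moebius, Ne, div_eq_iff (sub_ne_zero.2 hw₁)]
  intro heq
  exact h (by linear_combination -heq)

/-- The form in which the limit of `moebius z₁ z₂` at `∞` is continuity at `w⁻¹ = 0`. -/
theorem moebius_eq_of_inv (hw₀ : w ≠ 0) :
    moebius z₁ z₂ w = (z₂ - z₁ * w⁻¹) / (1 - w⁻¹) := by
  rw [moebius, ← mul_div_mul_right _ _ (inv_ne_zero hw₀)]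
  congr 1 <;> field_simp

theorem tendsto_moebius_nhdsNE_zero (h : z₁ ≠ z₂) :
    Tendsto (moebius z₁ z₂) (𝓝[≠] 0) (𝓝[≠] z₁) := by
  have hcont : ContinuousAt (moebius z₁ z₂) 0 :=
    ((continuousAt_const.mul continuousAt_id).sub continuousAt_const).div
      (continuousAt_id.sub continuousAt_const) (by norm_num)
  refine tendsto_nhdsWithin_iff.2 ⟨?_, ?_⟩
  · simpa only [moebius_zero] using hcont.tendsto.mono_left nhdsWithin_le_nhds
  · filter_upwards [self_mem_nhdsWithin, nhdsWithin_le_nhds (eventually_ne_nhds zero_ne_one)]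
      with w hw₀ hw₁
    exact moebius_ne_left h hw₀ hw₁

theorem tendsto_moebius_cobounded_nhdsNE (h : z₁ ≠ z₂) :
    Tendsto (moebius z₁ z₂) (cobounded ℂ) (𝓝[≠] z₂) := by
  have hcont : ContinuousAt (fun u : ℂ => (z₂ - z₁ * u) / (1 - u)) 0 :=
    (continuousAt_const.sub (continuousAt_const.mul continuousAt_id)).div
      (continuousAt_const.sub continuousAt_id) (by norm_num)
  have hlim := hcont.tendsto.comp (tendsto_inv₀_cobounded (α := ℂ))
  simp only [mul_zero, sub_zero, div_one] at hlim
  refine tendsto_nhdsWithin_iff.2 ⟨hlim.congr' ?_, ?_⟩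
  · filter_upwards [eventually_ne_cobounded 0] with w hw₀
    exact (moebius_eq_of_inv hw₀).symm
  · filter_upwards [eventually_ne_cobounded 1] with w hw₁
    exact moebius_ne_right_s12 h hw₁

end Moebius

theorem moebius_exp_mem_leaf {z₁ z₂ γ : ℂ} {p : ℝ} {α β : ℝ → ℝ} (hγ : γ ∈ Yset p α β) :
    moebius z₁ z₂ (Complex.exp (2 * Real.pi * γ)) ∈ leaf z₁ z₂ p α β :=
  Or.inl ⟨γ, hγ, rfl⟩

theorem accPt_leaf_of_le_mul_le {z₁ z₂ : ℂ} (h : z₁ ≠ z₂) {p δ : ℝ} {α β : ℝ → ℝ}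
    (hα : ∀ x, α x ≤ δ * x) (hβ : ∀ x, δ * x ≤ β x) :
    AccPt z₁ (𝓟 (leaf z₁ z₂ p α β)) ∧ AccPt z₂ (𝓟 (leaf z₁ z₂ p α β)) := by
  set c : ℝ → ℂ := fun x => 2 * Real.pi * ⟨x, 1 / p + δ * x⟩
  have hre : (fun x => (c x).re) = fun x => 2 * Real.pi * x := by
    ext x; simp [c]
  have hmem : ∀ x, moebius z₁ z₂ (Complex.exp (c x)) ∈ leaf z₁ z₂ p α β := fun x =>
    moebius_exp_mem_leaf ⟨add_le_add_right (hα x) _, add_le_add_right (hβ x) _⟩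
  have hexp_atBot : Tendsto (fun x => Complex.exp (c x)) atBot (𝓝[≠] 0) :=
    Complex.tendsto_exp_comap_re_atBot_nhdsNE.comp <| tendsto_comap_iff.2 <| by
      simpa only [Function.comp_def, hre, id] using tendsto_id.const_mul_atBot Real.two_pi_pos
  have hexp_atTop : Tendsto (fun x => Complex.exp (c x)) atTop (cobounded ℂ) :=
    Complex.tendsto_exp_comap_re_atTop.comp <| tendsto_comap_iff.2 <| by
      simpa only [Function.comp_def, hre, id] using tendsto_id.const_mul_atTop Real.two_pi_pos
  exact ⟨accPt_of_tendsto_nhdsNE ((tendsto_moebius_nhdsNE_zero h).comp hexp_atBot)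
      (.of_forall hmem),
    accPt_of_tendsto_nhdsNE ((tendsto_moebius_cobounded_nhdsNE h).comp hexp_atTop)
      (.of_forall hmem)⟩

open Filter in
theorem leaf_zero_one_not_isolated_general (δminus δplus : ℝ)
    (p : ℝ) :
    AccPt (0 : ℂ) (𝓟 (leaf 0 1 p (fun x => min (δminus * x) (δplus * x))
      (fun x => max (δminus * x) (δplus * x)))) ∧
    AccPt (1 : ℂ) (𝓟 (leaf 0 1 p (fun x => min (δminus * x) (δplus * x))
      (fun x => max (δminus * x) (δplus * x)))) :=
  accPt_leaf_of_le_mul_le zero_ne_one (fun x => min_le_left _ (δplus * x))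
    (fun x => le_max_left _ (δplus * x))

open Filter in
/-- For `α(x) = min (δ⁻ x, δ⁺ x)`, `β(x) = max (δ⁻ x, δ⁺ x)` and `p > 1`, the points `0` and
`1` are not isolated points of the leaf `𝓛(0, 1; p, α, β)`: `0` is a cluster point of
`𝓛 ∖ {0}` and `1` is a cluster point of `𝓛 ∖ {1}`. -/
theorem leaf_zero_one_not_isolated (δminus δplus : ℝ) (hδ : δminus ≤ δplus)
    (p : ℝ) (hp : 1 < p) :
    AccPt (0 : ℂ) (𝓟 (leaf 0 1 p (fun x => min (δminus * x) (δplus * x))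
      (fun x => max (δminus * x) (δplus * x)))) ∧
    AccPt (1 : ℂ) (𝓟 (leaf 0 1 p (fun x => min (δminus * x) (δplus * x))
      (fun x => max (δminus * x) (δplus * x)))) :=
  leaf_zero_one_not_isolated_general δminus δplus p
end
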